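/- arXiv:1405.7323 — 3 statements merged into one kernel-verified Lean document; each statement's English description precedes it below -/
import Mathlib

section
/- Let β, γ > 0 with β ≠ γ, and let (σ_n)_{n∈ℕ} be any sequence of strictly positive real numbers. Then the infinite product probability measures ⊗_{n∈ℕ} N(0, β⁻¹σ_n²) and ⊗_{n∈ℕ} N(0, γ⁻¹σ_n²) on ℝ^ℕ (with the product σ-algebra) are mutually singular. (This expresses that the Gaussian measures ρ^β and ρ^γ with densities Z⁻¹e^{−(β/2)∫|φ_x|²dx}dφ and Z⁻¹e^{−(γ/2)∫|φ_x|²dx}dφ are singular when β ≠ γ.) -/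
/-!
Under `⊗ₙ N(0, c σₙ²)` the rescaled coordinates `xₙ / σₙ` are i.i.d. `N(0, c)`, so by the strong
law of large numbers `(1/n) ∑_{i<n} (xᵢ / σᵢ)²` converges almost surely to the second moment `c`.
For `c = β⁻¹` and `c = γ⁻¹` the limits differ, so the two measures live on the disjoint sets where
this average converges to `β⁻¹`, resp. `γ⁻¹`.
-/

open MeasureTheory ProbabilityTheory Filter Topology Finset
open scoped NNReal

theorem ae_tendsto_average_infinitePi {α : Type*} [MeasurableSpace α] (Q : Measure α)
    [IsProbabilityMeasure Q] {g : α → ℝ} (hg : Measurable g) (hgQ : Integrable g Q) :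
    ∀ᵐ y ∂Measure.infinitePi (fun _ : ℕ ↦ Q),
      Tendsto (fun n : ℕ ↦ (∑ i ∈ range n, g (y i)) / n) atTop (𝓝 (∫ t, g t ∂Q)) := by
  set P := Measure.infinitePi fun _ : ℕ ↦ Q
  have heval : ∀ i, MeasurePreserving (fun y : ℕ → α ↦ y i) P Q :=
    measurePreserving_eval_infinitePi _
  have hindep : Pairwise fun i j ↦ IndepFun (fun y : ℕ → α ↦ g (y i)) (fun y ↦ g (y j)) P :=
    fun i j hij ↦ (iIndepFun_infinitePi (fun _ ↦ hg)).indepFun hij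
  have hident (i : ℕ) : IdentDistrib (fun y : ℕ → α ↦ g (y i)) (fun y ↦ g (y 0)) P P :=
    IdentDistrib.comp ⟨(heval i).measurable.aemeasurable, (heval 0).measurable.aemeasurable,
      by rw [(heval i).map_eq, (heval 0).map_eq]⟩ hg
  have hmean : ∫ y, g (y 0) ∂P = ∫ t, g t ∂Q := by
    rw [← integral_map (heval 0).measurable.aemeasurable hg.aestronglyMeasurable,
      (heval 0).map_eq]
  rw [← hmean]
  exact strong_law_ae_real (fun i (y : ℕ → α) ↦ g (y i))
    ((heval 0).integrable_comp_of_integrable hgQ) hindep hident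

theorem gaussianReal_mul_sq_map_div {c s : ℝ} (hc : 0 ≤ c) (hs : s ≠ 0) :
    (gaussianReal 0 (c * s ^ 2).toNNReal).map (· / s) = gaussianReal 0 c.toNNReal := by
  rw [gaussianReal_map_div_const, zero_div]
  congr 1
  ext
  simp [Real.coe_toNNReal _ hc, Real.coe_toNNReal _ (by positivity : 0 ≤ c * s ^ 2), hs]

theorem infinitePi_gaussianReal_map_div {c : ℝ} (hc : 0 ≤ c) {σ : ℕ → ℝ} (hσ : ∀ i, σ i ≠ 0) :
    (Measure.infinitePi fun i ↦ gaussianReal 0 (c * σ i ^ 2).toNNReal).map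
      (fun x i ↦ x i / σ i) = Measure.infinitePi fun _ ↦ gaussianReal 0 c.toNNReal := by
  rw [Measure.infinitePi_map_pi _ fun i ↦ measurable_div_const (σ i)]
  simp_rw [gaussianReal_mul_sq_map_div hc (hσ _)]

theorem integral_sq_gaussianReal (v : ℝ≥0) : ∫ t, t ^ 2 ∂gaussianReal 0 v = v := by
  simpa using (variance_of_integral_eq_zero aemeasurable_id integral_id_gaussianReal).symm.trans
    (variance_id_gaussianReal (μ := 0) (v := v))

theorem ae_tendsto_average_sq_div_gaussianReal {c : ℝ} (hc : 0 ≤ c) {σ : ℕ → ℝ}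
    (hσ : ∀ i, σ i ≠ 0) :
    ∀ᵐ x ∂Measure.infinitePi (fun i ↦ gaussianReal 0 (c * σ i ^ 2).toNNReal),
      Tendsto (fun n : ℕ ↦ (∑ i ∈ range n, (x i / σ i) ^ 2) / (n : ℝ)) atTop (𝓝 c) := by
  have h := ae_tendsto_average_infinitePi (gaussianReal 0 c.toNNReal) (g := fun t ↦ t ^ 2)
    (by fun_prop) (memLp_id_gaussianReal 2).integrable_sq
  rw [integral_sq_gaussianReal, Real.coe_toNNReal _ hc,
    ← infinitePi_gaussianReal_map_div hc hσ] at h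
  exact ae_of_ae_map
    (measurable_pi_lambda _ fun i ↦ (measurable_pi_apply i).div_const _).aemeasurable h

theorem MeasureTheory.Measure.MutuallySingular.of_ae_tendsto {α ι β : Type*}
    [MeasurableSpace α] [TopologicalSpace β] [T2Space β] {μ ν : Measure α} {l : Filter ι}
    [l.NeBot] {u : α → ι → β} {a b : β} (hab : a ≠ b)
    (hμ : ∀ᵐ x ∂μ, Tendsto (u x) l (𝓝 a)) (hν : ∀ᵐ x ∂ν, Tendsto (u x) l (𝓝 b)) :
    μ ⟂ₘ ν :=
  .mk (s := {x | ¬Tendsto (u x) l (𝓝 a)}) (t := {x | ¬Tendsto (u x) l (𝓝 b)}) hμ hν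
    fun _ _ ↦ not_and_or.mp fun h ↦ hab (tendsto_nhds_unique h.1 h.2)

theorem gaussian_product_measures_singular_general
    (β γ : ℝ) (hβ : 0 < β) (hγ : 0 < γ) (hβγ : β ≠ γ)
    (σ : ℕ → ℝ) (hσ : ∀ n, 0 < σ n)
    (μ ν : Measure (ℕ → ℝ))
    (hμ : ∀ s : Finset ℕ, μ.map s.restrict =
      Measure.pi (fun i : s => gaussianReal 0 (β⁻¹ * σ i ^ 2).toNNReal))
    (hν : ∀ s : Finset ℕ, ν.map s.restrict =
      Measure.pi (fun i : s => gaussianReal 0 (γ⁻¹ * σ i ^ 2).toNNReal)) :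
    μ ⟂ₘ ν := by
  obtain rfl := (Measure.isProjectiveLimit_infinitePi
    fun i ↦ gaussianReal 0 (β⁻¹ * σ i ^ 2).toNNReal).unique hμ
  obtain rfl := (Measure.isProjectiveLimit_infinitePi
    fun i ↦ gaussianReal 0 (γ⁻¹ * σ i ^ 2).toNNReal).unique hν
  have hσ₀ (n : ℕ) : σ n ≠ 0 := (hσ n).ne'
  exact .of_ae_tendsto (inv_injective.ne hβγ)
    (ae_tendsto_average_sq_div_gaussianReal (inv_nonneg.2 hβ.le) hσ₀)
    (ae_tendsto_average_sq_div_gaussianReal (inv_nonneg.2 hγ.le) hσ₀)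

/-- for `β ≠ γ` (both positive) and any strictly positive weights `(σ_n)`,
the infinite product Gaussian measures `⊗_n N(0, β⁻¹σ_n²)` and `⊗_n N(0, γ⁻¹σ_n²)` on
`ℝ^ℕ` (with the product σ-algebra), characterized by their finite-dimensional marginals,
are mutually singular. -/
theorem gaussian_product_measures_singular
    (β γ : ℝ) (hβ : 0 < β) (hγ : 0 < γ) (hβγ : β ≠ γ)
    (σ : ℕ → ℝ) (hσ : ∀ n, 0 < σ n)
    (μ ν : Measure (ℕ → ℝ)) [IsProbabilityMeasure μ] [IsProbabilityMeasure ν]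
    (hμ : ∀ s : Finset ℕ, μ.map s.restrict =
      Measure.pi (fun i : s => gaussianReal 0 (β⁻¹ * σ i ^ 2).toNNReal))
    (hν : ∀ s : Finset ℕ, ν.map s.restrict =
      Measure.pi (fun i : s => gaussianReal 0 (γ⁻¹ * σ i ^ 2).toNNReal)) :
    μ ⟂ₘ ν :=
  gaussian_product_measures_singular_general β γ hβ hγ hβγ σ hσ μ ν hμ hν
end

section
/- Hellinger integral of a shifted complex Gaussian: let σ > 0 and v ∈ ℂ, and let μ = N_ℂ(0, σ²) and ν = N_ℂ(v, σ²). Then ν is absolutely continuous with respect to μ and the Hellinger integral satisfies ∫_ℂ √(dν/dμ) dμ = e^{−|v|²/(8σ²)}. -/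
open MeasureTheory ProbabilityTheory
open scoped NNReal ENNReal

/-- The complex Gaussian measure `N_ℂ(m, σ²)` on `ℂ` (with `v = σ²`): the pushforward of the
product of the real Gaussian measures `N(Re m, σ²)` and `N(Im m, σ²)` on `ℝ × ℝ` under
`(x, y) ↦ x + i y`. -/
noncomputable def complexGaussian (m : ℂ) (v : ℝ≥0) : Measure ℂ :=
  ((gaussianReal m.re v).prod (gaussianReal m.im v)).map
    (fun p : ℝ × ℝ => (p.1 : ℂ) + p.2 * Complex.I)

/-! The Hellinger integral is unchanged by the measurable isomorphism `ℝ × ℝ ≃ ℂ` and is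
multiplicative over products of absolutely continuous pairs, so it reduces to the real pair
`N(0, σ²)`, `N(a, σ²)`. There the likelihood ratio is `exp (a x / σ² - a² / (2σ²))`; its square
root is `exp (-a² / (4σ²)) · exp (a x / (2σ²))`, whose mean is read off the Gaussian moment
generating function: `exp (-a² / (8σ²))`. The factors for `a = Re v` and `a = Im v` multiply to
`exp (-|v|² / (8σ²))`. -/

namespace MeasureTheory

variable {α β : Type*} [MeasurableSpace α] [MeasurableSpace β]

noncomputable def hellingerIntegral (μ ν : Measure α) : ℝ :=
  ∫ x, √(ν.rnDeriv μ x).toReal ∂μ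

lemma hellingerIntegral_withDensity (μ : Measure α) [SigmaFinite μ] {f : α → ℝ≥0∞}
    (hf : Measurable f) :
    hellingerIntegral μ (μ.withDensity f) = ∫ x, √(f x).toReal ∂μ :=
  integral_congr_ae <| (Measure.rnDeriv_withDensity μ hf).mono fun x hx => by simp only [hx]

lemma hellingerIntegral_map {f : α → β} (hf : MeasurableEmbedding f) (μ ν : Measure α)
    [SigmaFinite μ] [SigmaFinite ν] :
    hellingerIntegral (μ.map f) (ν.map f) = hellingerIntegral μ ν := by
  rw [hellingerIntegral, hf.integral_map]
  exact integral_congr_ae <| (hf.rnDeriv_map ν μ).mono fun x hx => by simp only [hx]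

lemma hellingerIntegral_prod {μ₁ ν₁ : Measure α} {μ₂ ν₂ : Measure β}
    [SigmaFinite μ₁] [SigmaFinite ν₁] [SigmaFinite μ₂] [SigmaFinite ν₂]
    (h₁ : ν₁ ≪ μ₁) (h₂ : ν₂ ≪ μ₂) :
    hellingerIntegral (μ₁.prod μ₂) (ν₁.prod ν₂)
      = hellingerIntegral μ₁ ν₁ * hellingerIntegral μ₂ ν₂ := by
  conv_lhs => rw [← Measure.withDensity_rnDeriv_eq ν₁ μ₁ h₁,
    ← Measure.withDensity_rnDeriv_eq ν₂ μ₂ h₂,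
    prod_withDensity (Measure.measurable_rnDeriv _ _) (Measure.measurable_rnDeriv _ _),
    hellingerIntegral_withDensity _ (by fun_prop)]
  simp only [ENNReal.toReal_mul, Real.sqrt_mul ENNReal.toReal_nonneg]
  exact integral_prod_mul (fun x => √(ν₁.rnDeriv μ₁ x).toReal)
    (fun y => √(ν₂.rnDeriv μ₂ y).toReal)

end MeasureTheory

namespace ProbabilityTheory

noncomputable def gaussianLikelihoodRatio (v : ℝ≥0) (a x : ℝ) : ℝ :=
  Real.exp (a * x / v - a ^ 2 / (2 * v))

lemma gaussianReal_eq_withDensity_gaussianLikelihoodRatio (a : ℝ) {v : ℝ≥0} (hv : v ≠ 0) :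
    gaussianReal a v = (gaussianReal 0 v).withDensity
      (fun x => ENNReal.ofReal (gaussianLikelihoodRatio v a x)) := by
  have hv' : (v : ℝ) ≠ 0 := by exact_mod_cast hv
  rw [gaussianReal_of_var_ne_zero a hv, gaussianReal_of_var_ne_zero 0 hv,
    ← withDensity_mul _ (measurable_gaussianPDF 0 _)
      (by unfold gaussianLikelihoodRatio; fun_prop)]
  congr 1
  funext x
  rw [Pi.mul_apply, gaussianPDF, gaussianPDF, ← ENNReal.ofReal_mul (gaussianPDFReal_nonneg _ _ _),
    gaussianPDFReal, gaussianPDFReal, gaussianLikelihoodRatio]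
  simp only [mul_assoc, ← Real.exp_add]
  congr 3
  field_simp
  ring

lemma hellingerIntegral_gaussianReal (a : ℝ) {v : ℝ≥0} (hv : v ≠ 0) :
    hellingerIntegral (gaussianReal 0 v) (gaussianReal a v) = Real.exp (-a ^ 2 / (8 * v)) := by
  have hv' : (v : ℝ) ≠ 0 := by exact_mod_cast hv
  have hsqrt : ∀ x, √(ENNReal.ofReal (gaussianLikelihoodRatio v a x)).toReal
      = Real.exp (-a ^ 2 / (4 * v)) * Real.exp (a / (2 * v) * x) := by
    intro x
    rw [gaussianLikelihoodRatio, ENNReal.toReal_ofReal (Real.exp_nonneg _), ← Real.exp_half,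
      ← Real.exp_add]
    congr 1
    field_simp
    ring
  have hmgf := congrFun (mgf_fun_id_gaussianReal (μ := 0) (v := v)) (a / (2 * v))
  rw [mgf] at hmgf
  rw [gaussianReal_eq_withDensity_gaussianLikelihoodRatio a hv,
    hellingerIntegral_withDensity _ (by unfold gaussianLikelihoodRatio; fun_prop)]
  simp only [hsqrt]
  rw [integral_const_mul, hmgf, ← Real.exp_add]
  congr 1
  field_simp
  ring

end ProbabilityTheory

lemma measurableEmbedding_ofReal_add_mul_I :
    MeasurableEmbedding fun p : ℝ × ℝ => (p.1 : ℂ) + p.2 * Complex.I := by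
  convert Complex.measurableEquivRealProd.symm.measurableEmbedding using 2 with p
  rw [Complex.measurableEquivRealProd_symm_apply, Complex.mk_eq_add_mul_I]

/-- Hellinger integral of a shifted complex Gaussian: for `σ > 0` and `v ∈ ℂ`,
with `μ = N_ℂ(0, σ²)` and `ν = N_ℂ(v, σ²)`, `ν` is absolutely continuous with respect to
`μ` and `∫_ℂ √(dν/dμ) dμ = e^{-|v|²/(8σ²)}`. -/
theorem hellinger_integral_shifted_complex_gaussian
    (σ : ℝ) (hσ : 0 < σ) (v : ℂ) :
    complexGaussian v (σ ^ 2).toNNReal ≪ complexGaussian 0 (σ ^ 2).toNNReal ∧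
    (∫ z, Real.sqrt (((complexGaussian v (σ ^ 2).toNNReal).rnDeriv
          (complexGaussian 0 (σ ^ 2).toNNReal) z).toReal)
        ∂(complexGaussian 0 (σ ^ 2).toNNReal)) =
      Real.exp (-‖v‖ ^ 2 / (8 * σ ^ 2)) := by
  have hw : (σ ^ 2).toNNReal ≠ 0 := by simpa using hσ.ne'
  have hac (a : ℝ) : gaussianReal a (σ ^ 2).toNNReal ≪ gaussianReal 0 (σ ^ 2).toNNReal := by
    rw [gaussianReal_eq_withDensity_gaussianLikelihoodRatio a hw]
    exact withDensity_absolutelyContinuous _ _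
  simp only [complexGaussian, Complex.zero_re, Complex.zero_im]
  refine ⟨((hac _).prod (hac _)).map measurableEmbedding_ofReal_add_mul_I.measurable, ?_⟩
  change hellingerIntegral _ _ = _
  rw [hellingerIntegral_map measurableEmbedding_ofReal_add_mul_I,
    hellingerIntegral_prod (hac _) (hac _), hellingerIntegral_gaussianReal _ hw,
    hellingerIntegral_gaussianReal _ hw, ← Real.exp_add,
    Real.coe_toNNReal _ (sq_nonneg σ), Complex.sq_norm, Complex.normSq_apply]
  congr 1
  field_simp
  ring
end

section
/- Let (σ_n)_{n∈ℕ} be strictly positive reals and (v_n)_{n∈ℕ} complex numbers with Σ_{n∈ℕ} |v_n|²/σ_n² = ∞. Then the infinite product probability measures μ = ⊗_{n∈ℕ} N_ℂ(0, σ_n²) and ν = ⊗_{n∈ℕ} N_ℂ(v_n, σ_n²) on ℂ^ℕ (with the product σ-algebra) are mutually singular. (This says that the distribution of the shifted random function w^ω = v + u^ω is singular with respect to that of u^ω = Σ g_n(ω) û_n e^{in·x} when Σ |v̂_n|²/|û_n|² = ∞.) -/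
open MeasureTheory ProbabilityTheory
open scoped NNReal ENNReal

/-!
The test statistic `S(y) = ∑_{i ∈ F} Re(conj(v_i / σ_i²) y_i)` over a finite set `F` of
coordinates is sub-Gaussian with variance proxy `t_F = ∑_{i ∈ F} |v_i|² / σ_i²`, centred at `0`
under `μ` and at `t_F` under `ν`. The Chernoff bound therefore gives `μ(S ≥ t_F / 2) ≤ e^{-t_F/8}`
and `ν(S < t_F / 2) ≤ e^{-t_F/8}`. Since `∑ |v_n|²/σ_n² = ∞`, we can choose `F_n` with
`t_{F_n} ≥ 8n`, and Borel–Cantelli applied to both measures shows that `μ` is carried by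
`{S_{F_n} < t_{F_n}/2 eventually}` and `ν` by its complement.
-/

open Filter Real
open scoped ComplexConjugate

theorem MeasureTheory.Measure.MutuallySingular.of_tsum_ne_top {α : Type*} [MeasurableSpace α]
    {μ ν : Measure α} (s : ℕ → Set α) (hμ : ∑' n, μ (s n) ≠ ∞) (hν : ∑' n, ν (s n)ᶜ ≠ ∞) :
    μ ⟂ₘ ν := by
  refine .mk (measure_limsup_atTop_eq_zero hμ) (measure_limsup_atTop_eq_zero hν) fun x _ ↦ ?_
  simp only [Set.mem_union, mem_limsup_iff_frequently_mem, Set.mem_compl_iff]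
  by_cases h : ∃ᶠ n in atTop, x ∈ s n
  · exact .inl h
  · exact .inr (not_frequently.1 h).frequently

theorem exists_lt_sum_of_tsum_ofReal_eq_top {α : Type*} {f : α → ℝ} (hf : ∀ i, 0 ≤ f i)
    (h : ∑' i, ENNReal.ofReal (f i) = ∞) (R : ℝ) : ∃ s : Finset α, R < ∑ i ∈ s, f i := by
  by_contra! hR
  rw [← ENNReal.ofReal_tsum_of_nonneg hf (summable_of_sum_le hf hR)] at h
  exact ENNReal.ofReal_ne_top h

namespace ProbabilityTheory.HasSubgaussianMGF

variable {Ω Ω' : Type*} {mΩ : MeasurableSpace Ω} {mΩ' : MeasurableSpace Ω'} {μ : Measure Ω}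
  {c : ℝ≥0}

theorem map_iff {f : Ω → Ω'} {X : Ω' → ℝ} (hf : Measurable f) (hX : Measurable X) :
    HasSubgaussianMGF X c (μ.map f) ↔ HasSubgaussianMGF (X ∘ f) c μ := by
  rw [← id_map_iff hX.aemeasurable, Measure.map_map hX hf, id_map_iff (hX.comp hf).aemeasurable]

theorem measure_ge_le_ofReal [IsFiniteMeasure μ] {X : Ω → ℝ} (h : HasSubgaussianMGF X c μ)
    {ε : ℝ} (hε : 0 ≤ ε) : μ {ω | ε ≤ X ω} ≤ ENNReal.ofReal (exp (-ε ^ 2 / (2 * c))) := by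
  rw [← ofReal_measureReal]
  exact ENNReal.ofReal_le_ofReal (h.measure_ge_le hε)

theorem pi_sum {ι : Type*} [Fintype ι] {Ω : ι → Type*} [∀ i, MeasurableSpace (Ω i)]
    {P : ∀ i, Measure (Ω i)} [∀ i, IsProbabilityMeasure (P i)] {X : ∀ i, Ω i → ℝ} {c : ι → ℝ≥0}
    (hX : ∀ i, HasSubgaussianMGF (X i) (c i) (P i)) :
    HasSubgaussianMGF (fun ω ↦ ∑ i, X i (ω i)) (∑ i, c i) (Measure.pi P) :=
  sum_of_iIndepFun (iIndepFun_pi fun i ↦ (hX i).aemeasurable) fun i _ ↦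
    .of_map (measurable_pi_apply i).aemeasurable
      (by rw [(measurePreserving_eval P i).map_eq]; exact hX i)

end ProbabilityTheory.HasSubgaussianMGF

theorem hasSubgaussianMGF_sub_gaussianReal (m : ℝ) (v : ℝ≥0) :
    HasSubgaussianMGF (fun x ↦ x - m) v (gaussianReal m v) := by
  rw [← HasSubgaussianMGF.id_map_iff (by fun_prop), gaussianReal_map_sub_const, sub_self]
  exact ⟨integrable_exp_mul_gaussianReal, fun t ↦ by simp [mgf_id_gaussianReal]⟩

instance (m : ℂ) (v : ℝ≥0) : IsProbabilityMeasure (complexGaussian m v) :=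
  Measure.isProbabilityMeasure_map (by fun_prop)

theorem hasSubgaussianMGF_complexGaussian (c m : ℂ) (v : ℝ≥0) :
    HasSubgaussianMGF (fun z ↦ (conj c * (z - m)).re) (‖c‖₊ ^ 2 * v) (complexGaussian m v) := by
  set P := (gaussianReal m.re v).prod (gaussianReal m.im v)
  have hre : HasSubgaussianMGF (fun p : ℝ × ℝ ↦ c.re * (p.1 - m.re))
      (⟨c.re ^ 2, sq_nonneg _⟩ * v) P :=
    .of_map (X := fun x ↦ c.re * (x - m.re)) measurable_fst.aemeasurable (by
      simpa [P] using (hasSubgaussianMGF_sub_gaussianReal m.re v).const_mul c.re)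
  have him : HasSubgaussianMGF (fun p : ℝ × ℝ ↦ c.im * (p.2 - m.im))
      (⟨c.im ^ 2, sq_nonneg _⟩ * v) P :=
    .of_map (X := fun y ↦ c.im * (y - m.im)) measurable_snd.aemeasurable (by
      simpa [P] using (hasSubgaussianMGF_sub_gaussianReal m.im v).const_mul c.im)
  have hsum := hre.add_of_indepFun him
    (indepFun_prod (X := fun x ↦ c.re * (x - m.re)) (Y := fun y ↦ c.im * (y - m.im))
      (by fun_prop) (by fun_prop))
  rw [complexGaussian, HasSubgaussianMGF.map_iff (by fun_prop) (by fun_prop)]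
  convert hsum using 1
  · ext p
    simp [Complex.mul_re]
  · ext
    simp only [NNReal.coe_add, NNReal.coe_mul, NNReal.coe_pow, coe_nnnorm, Complex.sq_norm,
      Complex.normSq_apply]
    change _ = c.re ^ 2 * (v : ℝ) + c.im ^ 2 * v
    ring

theorem exists_measurableSet_pi_complexGaussian_le {ι : Type*} [Fintype ι] (V : ι → ℝ≥0)
    (v : ι → ℂ) :
    ∃ s : Set (ι → ℂ), MeasurableSet s ∧
      (Measure.pi fun i ↦ complexGaussian 0 (V i)) s
        ≤ ENNReal.ofReal (exp (-(∑ i, ‖v i‖ ^ 2 / V i) / 8)) ∧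
      (Measure.pi fun i ↦ complexGaussian (v i) (V i)) sᶜ
        ≤ ENNReal.ofReal (exp (-(∑ i, ‖v i‖ ^ 2 / V i) / 8)) := by
  set t := ∑ i, ‖v i‖ ^ 2 / V i
  -- A coordinate with `V i = 0` has `c i = 0` and contributes `0` to `t` (as `x / 0 = 0`).
  set c : ι → ℂ := fun i ↦ v i / (V i : ℝ)
  have hc : ((∑ i, ‖c i‖₊ ^ 2 * V i : ℝ≥0) : ℝ) = t := by
    push_cast
    refine Finset.sum_congr rfl fun i _ ↦ ?_
    rw [norm_div, Complex.norm_real, Real.norm_eq_abs, div_pow, sq_abs]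
    rcases eq_or_ne (V i : ℝ) 0 with h | h
    · simp [h]
    · field_simp
  have hshift : ∀ y : ι → ℂ,
      ∑ i, (conj (c i) * (y i - v i)).re = ∑ i, (conj (c i) * y i).re - t := by
    intro y
    rw [← Finset.sum_sub_distrib]
    refine Finset.sum_congr rfl fun i _ ↦ ?_
    simp only [c, mul_sub, Complex.sub_re, map_div₀, Complex.conj_ofReal, div_mul_eq_mul_div,
      Complex.conj_mul', Complex.div_ofReal_re]
    norm_cast
  have htail : -(t / 2) ^ 2 / (2 * t) = -t / 8 := by
    rcases eq_or_ne t 0 with h | h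
    · simp [h]
    · field_simp
      ring
  refine ⟨{y | t / 2 ≤ ∑ i, (conj (c i) * y i).re}, measurableSet_le (by fun_prop) (by fun_prop),
    ?_, ?_⟩
  · have h := (HasSubgaussianMGF.pi_sum fun i ↦
      hasSubgaussianMGF_complexGaussian (c i) 0 (V i)).measure_ge_le_ofReal (ε := t / 2)
        (by positivity)
    simpa [hc, htail] using h
  · have h := (HasSubgaussianMGF.pi_sum fun i ↦
      hasSubgaussianMGF_complexGaussian (c i) (v i) (V i)).neg.measure_ge_le_ofReal (ε := t / 2)
        (by positivity)
    rw [hc, htail] at h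
    refine (measure_mono fun y hy ↦ ?_).trans h
    simp only [Set.mem_compl_iff, Set.mem_ofPred_eq, not_le, Pi.neg_apply, hshift] at hy ⊢
    linarith

theorem shifted_gaussian_product_singular_general
    (σ : ℕ → ℝ) (v : ℕ → ℂ)
    (hsum : (∑' n : ℕ, ENNReal.ofReal (‖v n‖ ^ 2 / σ n ^ 2)) = ∞)
    (μ ν : Measure (ℕ → ℂ))
    (hμ : ∀ s : Finset ℕ, μ.map s.restrict =
      Measure.pi (fun i : s => complexGaussian 0 (σ i ^ 2).toNNReal))
    (hν : ∀ s : Finset ℕ, ν.map s.restrict =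
      Measure.pi (fun i : s => complexGaussian (v i) (σ i ^ 2).toNNReal)) :
    μ ⟂ₘ ν := by
  set V : ℕ → ℝ≥0 := fun n ↦ (σ n ^ 2).toNNReal
  have hV : ∀ n, (V n : ℝ) = σ n ^ 2 := fun n ↦ Real.coe_toNNReal _ (sq_nonneg _)
  choose F hF using fun n : ℕ ↦
    exists_lt_sum_of_tsum_ofReal_eq_top (fun i ↦ by positivity) hsum (8 * n)
  choose s hs hμs hνs using fun n ↦
    exists_measurableSet_pi_complexGaussian_le (fun i : F n ↦ V i) (fun i ↦ v i)
  have hbound : ∀ n : ℕ, ENNReal.ofReal (exp (-(∑ i : F n, ‖v i‖ ^ 2 / V i) / 8))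
      ≤ ENNReal.ofReal (exp (-n)) := by
    intro n
    simp_rw [hV, Finset.sum_coe_sort (F n) fun i ↦ ‖v i‖ ^ 2 / σ i ^ 2]
    gcongr
    linarith [hF n]
  have hexp : ∑' n : ℕ, ENNReal.ofReal (exp (-n)) ≠ ∞ := by
    rw [← ENNReal.ofReal_tsum_of_nonneg (fun n ↦ (exp_pos _).le) summable_exp_neg_nat]
    exact ENNReal.ofReal_ne_top
  refine .of_tsum_ne_top (fun n ↦ (F n).restrict ⁻¹' s n)
    (ne_top_of_le_ne_top hexp (ENNReal.tsum_le_tsum fun n ↦ ?_))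
    (ne_top_of_le_ne_top hexp (ENNReal.tsum_le_tsum fun n ↦ ?_))
  · rw [← Measure.map_apply (Finset.measurable_restrict _) (hs n), hμ]
    exact (hμs n).trans (hbound n)
  · rw [← Set.preimage_compl, ← Measure.map_apply (Finset.measurable_restrict _) (hs n).compl, hν]
    exact (hνs n).trans (hbound n)

/-- if `(σ_n)` are strictly positive and `(v_n)` are complex numbers with
`∑_n |v_n|²/σ_n² = ∞`, then the infinite product measures `μ = ⊗_n N_ℂ(0, σ_n²)` and
`ν = ⊗_n N_ℂ(v_n, σ_n²)` on `ℂ^ℕ` (with the product σ-algebra), characterized by their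
finite-dimensional marginals, are mutually singular. -/
theorem shifted_gaussian_product_singular
    (σ : ℕ → ℝ) (hσ : ∀ n, 0 < σ n) (v : ℕ → ℂ)
    (hsum : (∑' n : ℕ, ENNReal.ofReal (‖v n‖ ^ 2 / σ n ^ 2)) = ∞)
    (μ ν : Measure (ℕ → ℂ)) [IsProbabilityMeasure μ] [IsProbabilityMeasure ν]
    (hμ : ∀ s : Finset ℕ, μ.map s.restrict =
      Measure.pi (fun i : s => complexGaussian 0 (σ i ^ 2).toNNReal))
    (hν : ∀ s : Finset ℕ, ν.map s.restrict =
      Measure.pi (fun i : s => complexGaussian (v i) (σ i ^ 2).toNNReal)) :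
    μ ⟂ₘ ν :=
  shifted_gaussian_product_singular_general σ v hsum μ ν hμ hν
end
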